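/- arXiv:1505.05391 — 2 statements merged into one kernel-verified Lean document; each statement's English description precedes it below -/
import Mathlib

section
/- Variance reduction of deterministic mixture weights (Theorem 1): With x_i ~ q_i independent, the variance of the full DM-MIS estimator Î_DM = (1/N) ∑_i f(x_i)π(x_i)/ψ(x_i), with ψ = (1/N)∑_j q_j, is less than or equal to the variance of the standard MIS estimator Î_MIS = (1/N) ∑_i f(x_i)π(x_i)/q_i(x_i). -/
/-!
Both estimators are averages of independent terms, so each variance is `1/N²` times the sum over
`i` of (second moment − squared mean) of the `i`-th term, computed against the density `q i`.
With `F = f π`, every MIS term has mean `∫ F`, whereas the DM means sum to `N ∫ F` (because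
`∑ q i = N ψ`), so by Cauchy–Schwarz their squares sum to at least `N (∫ F)²`. The second moments go
the other way: `∑ᵢ qᵢ (F/ψ)² = (∑ᵢ F)² / ∑ᵢ qᵢ ≤ ∑ᵢ F² / qᵢ` pointwise by Sedrakyan's inequality.
-/

open MeasureTheory ProbabilityTheory Finset

section DensityTransfer

variable {Ω α : Type*} [MeasurableSpace Ω] [MeasurableSpace α] {μ : Measure Ω} {ν : Measure α}
  {X : Ω → α} {q φ : α → ℝ}

theorem integral_comp_eq_integral_mul_of_map_eq_withDensity (hX : AEMeasurable X μ)
    (hq : AEMeasurable q ν) (hq0 : 0 ≤ᵐ[ν] q)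
    (hlaw : μ.map X = ν.withDensity fun x => ENNReal.ofReal (q x))
    (hφ : AEStronglyMeasurable φ ν) :
    ∫ ω, φ (X ω) ∂μ = ∫ x, q x * φ x ∂ν := by
  have hac : μ.map X ≪ ν := hlaw ▸ withDensity_absolutelyContinuous _ _
  rw [← integral_map hX (hφ.mono_ac hac), hlaw, integral_withDensity_eq_integral_toReal_smul₀
    hq.ennreal_ofReal (ae_of_all _ fun _ => ENNReal.ofReal_lt_top)]
  refine integral_congr_ae ?_
  filter_upwards [hq0] with x hx
  simp [ENNReal.toReal_ofReal hx]

theorem integrable_mul_of_map_eq_withDensity (hX : AEMeasurable X μ)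
    (hq : AEMeasurable q ν) (hq0 : 0 ≤ᵐ[ν] q)
    (hlaw : μ.map X = ν.withDensity fun x => ENNReal.ofReal (q x))
    (hφ : AEStronglyMeasurable φ ν) (hφX : Integrable (fun ω => φ (X ω)) μ) :
    Integrable (fun x => q x * φ x) ν := by
  have hac : μ.map X ≪ ν := hlaw ▸ withDensity_absolutelyContinuous _ _
  have h := (integrable_map_measure (hφ.mono_ac hac) hX).2 hφX
  rw [hlaw, integrable_withDensity_iff_integrable_smul₀' hq.ennreal_ofReal
    (ae_of_all _ fun _ => ENNReal.ofReal_lt_top)] at h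
  refine h.congr ?_
  filter_upwards [hq0] with x hx
  simp [ENNReal.toReal_ofReal hx]

theorem variance_comp_eq_of_map_eq_withDensity [IsProbabilityMeasure μ] (hX : AEMeasurable X μ)
    (hq : AEMeasurable q ν) (hq0 : 0 ≤ᵐ[ν] q)
    (hlaw : μ.map X = ν.withDensity fun x => ENNReal.ofReal (q x))
    (hφ : AEStronglyMeasurable φ ν) (hφX : MemLp (fun ω => φ (X ω)) 2 μ) :
    variance (fun ω => φ (X ω)) μ = ∫ x, q x * φ x ^ 2 ∂ν - (∫ x, q x * φ x ∂ν) ^ 2 := by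
  rw [variance_eq_sub hφX, integral_comp_eq_integral_mul_of_map_eq_withDensity hX hq hq0 hlaw hφ,
    ← integral_comp_eq_integral_mul_of_map_eq_withDensity (φ := fun x => φ x ^ 2) hX hq hq0 hlaw
      (hφ.pow 2)]
  rfl

end DensityTransfer

theorem variance_const_mul_sum_comp_of_iIndepFun {Ω ι β : Type*} [MeasurableSpace Ω]
    [MeasurableSpace β] [Fintype ι] {μ : Measure Ω} {X : ι → Ω → β} (hX : ∀ i, AEMeasurable (X i) μ)
    (hind : iIndepFun X μ) {φ : ι → β → ℝ} (hφ : ∀ i, AEMeasurable (φ i) (μ.map (X i)))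
    (hφX : ∀ i, MemLp (fun ω => φ i (X i ω)) 2 μ) (c : ℝ) :
    variance (fun ω => c * ∑ i, φ i (X i ω)) μ
      = c ^ 2 * ∑ i, variance (fun ω => φ i (X i ω)) μ := by
  rw [variance_const_mul]
  congr 1
  convert IndepFun.variance_sum (s := univ) (fun i _ => hφX i) fun i _ j _ hij =>
    (hind.indepFun hij).comp₀ (hX i) (hX j) (hφ i) (hφ j)
  simp

section Mixture

variable {ι : Type*} [Fintype ι]

theorem sum_mul_div_mean {q : ι → ℝ} {F : ℝ} (hq : F ≠ 0 → ∀ i, 0 < q i) :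
    (∑ i, q i) * (F / ((Fintype.card ι : ℝ)⁻¹ * ∑ i, q i)) = Fintype.card ι * F := by
  rcases eq_or_ne F 0 with rfl | hF
  · simp
  rcases isEmpty_or_nonempty ι with hι | hι
  · simp
  have hs : 0 < ∑ i, q i := sum_pos (fun i _ => hq hF i) univ_nonempty
  have hc : (0 : ℝ) < Fintype.card ι := by exact_mod_cast Fintype.card_pos
  field_simp

theorem sum_mul_div_mean_sq_le {q : ι → ℝ} {F : ℝ} (hq : F ≠ 0 → ∀ i, 0 < q i) :
    (∑ i, q i) * (F / ((Fintype.card ι : ℝ)⁻¹ * ∑ i, q i)) ^ 2 ≤ ∑ i, q i * (F / q i) ^ 2 := by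
  rcases eq_or_ne F 0 with rfl | hF
  · simp
  rcases isEmpty_or_nonempty ι with hι | hι
  · simp
  have hs : 0 < ∑ i, q i := sum_pos (fun i _ => hq hF i) univ_nonempty
  calc (∑ i, q i) * (F / ((Fintype.card ι : ℝ)⁻¹ * ∑ i, q i)) ^ 2
      = ((∑ i, q i) * (F / ((Fintype.card ι : ℝ)⁻¹ * ∑ i, q i))) ^ 2 / ∑ i, q i := by
        field_simp
    _ = (∑ _i : ι, F) ^ 2 / ∑ i, q i := by
        rw [sum_mul_div_mean hq, sum_const, card_univ, nsmul_eq_mul]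
    _ ≤ ∑ i, F ^ 2 / q i := sq_sum_div_le_sum_sq_div _ _ fun i _ => hq hF i
    _ = ∑ i, q i * (F / q i) ^ 2 := sum_congr rfl fun i _ => by field_simp [(hq hF i).ne']

theorem card_mul_sq_le_sum_sq_of_sum_eq {a : ι → ℝ} {m : ℝ}
    (h : ∑ i, a i = Fintype.card ι * m) : Fintype.card ι * m ^ 2 ≤ ∑ i, a i ^ 2 := by
  have hdev : ∑ i, (a i - m) ^ 2 = ∑ i, a i ^ 2 - Fintype.card ι * m ^ 2 := by
    simp only [sub_sq, sum_add_distrib, sum_sub_distrib, mul_right_comm _ (a _), ← mul_sum, h,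
      sum_const, card_univ, nsmul_eq_mul]
    ring
  linarith [sum_nonneg fun i (_ : i ∈ univ) => sq_nonneg (a i - m)]

theorem integral_mul_div_self_eq {α : Type*} [MeasurableSpace α] {ν : Measure α} {g F : α → ℝ}
    (hpos : ∀ x, F x ≠ 0 → 0 < g x) : ∫ x, g x * (F x / g x) ∂ν = ∫ x, F x ∂ν := by
  congr with x
  rcases eq_or_ne (F x) 0 with hF | hF
  · simp [hF]
  · exact mul_div_cancel₀ _ (hpos x hF).ne'

variable {α : Type*} [MeasurableSpace α] {ν : Measure α} {q : ι → α → ℝ} {F ψ : α → ℝ}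

theorem sum_integral_mul_div_mixture (hψ : ∀ x, ψ x = (Fintype.card ι : ℝ)⁻¹ * ∑ j, q j x)
    (hpos : ∀ i x, F x ≠ 0 → 0 < q i x)
    (hint : ∀ i, Integrable (fun x => q i x * (F x / ψ x)) ν) :
    ∑ i, ∫ x, q i x * (F x / ψ x) ∂ν = Fintype.card ι * ∫ x, F x ∂ν := by
  rw [← integral_finsetSum _ fun i _ => hint i, ← integral_const_mul]
  congr with x
  rw [← sum_mul, hψ, sum_mul_div_mean fun hF i => hpos i x hF]

theorem sum_integral_mul_div_mixture_sq_le (hψ : ∀ x, ψ x = (Fintype.card ι : ℝ)⁻¹ * ∑ j, q j x)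
    (hpos : ∀ i x, F x ≠ 0 → 0 < q i x)
    (hH : ∀ i, Integrable (fun x => q i x * (F x / ψ x) ^ 2) ν)
    (hG : ∀ i, Integrable (fun x => q i x * (F x / q i x) ^ 2) ν) :
    ∑ i, ∫ x, q i x * (F x / ψ x) ^ 2 ∂ν ≤ ∑ i, ∫ x, q i x * (F x / q i x) ^ 2 ∂ν := by
  rw [← integral_finsetSum _ fun i _ => hH i, ← integral_finsetSum _ fun i _ => hG i]
  refine integral_mono (integrable_finsetSum _ fun i _ => hH i)
    (integrable_finsetSum _ fun i _ => hG i) fun x => ?_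
  simp only [← sum_mul, hψ]
  exact sum_mul_div_mean_sq_le fun hF i => hpos i x hF

theorem sum_sub_sq_integral_mul_div_mixture_le
    (hψ : ∀ x, ψ x = (Fintype.card ι : ℝ)⁻¹ * ∑ j, q j x)
    (hpos : ∀ i x, F x ≠ 0 → 0 < q i x)
    (hH₁ : ∀ i, Integrable (fun x => q i x * (F x / ψ x)) ν)
    (hH : ∀ i, Integrable (fun x => q i x * (F x / ψ x) ^ 2) ν)
    (hG : ∀ i, Integrable (fun x => q i x * (F x / q i x) ^ 2) ν) :
    ∑ i, (∫ x, q i x * (F x / ψ x) ^ 2 ∂ν - (∫ x, q i x * (F x / ψ x) ∂ν) ^ 2)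
      ≤ ∑ i, (∫ x, q i x * (F x / q i x) ^ 2 ∂ν - (∫ x, q i x * (F x / q i x) ∂ν) ^ 2) := by
  have hsq := card_mul_sq_le_sum_sq_of_sum_eq (sum_integral_mul_div_mixture hψ hpos hH₁)
  simp only [sum_sub_distrib, integral_mul_div_self_eq (hpos _), sum_const, card_univ,
    nsmul_eq_mul]
  linarith [sum_integral_mul_div_mixture_sq_le hψ hpos hH hG]

end Mixture

theorem full_DM_variance_le_standard_MIS_variance_general
    {n N : ℕ}
    (tgt : (Fin n → ℝ) → ℝ) (f : (Fin n → ℝ) → ℝ)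
    (htgt_int : Integrable tgt)
    (hf_meas : Measurable f)
    (q : Fin N → (Fin n → ℝ) → ℝ)
    (hq_meas : ∀ i, Measurable (q i)) (hq_nonneg : ∀ i x, 0 ≤ q i x)
    (hpos : ∀ i x, f x * tgt x ≠ 0 → 0 < q i x)
    (ψ : (Fin n → ℝ) → ℝ)
    (hψ : ∀ x, ψ x = (1 / (N : ℝ)) * ∑ j, q j x)
    {Ω : Type*} [MeasureSpace Ω] [IsProbabilityMeasure (ℙ : Measure Ω)]
    (X : Fin N → Ω → (Fin n → ℝ)) (hX : ∀ i, Measurable (X i))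
    (hindep : iIndepFun X ℙ)
    (hdist : ∀ i, Measure.map (X i) ℙ
      = volume.withDensity (fun x => ENNReal.ofReal (q i x)))
    (hL2_MIS : ∀ i, MemLp (fun ω => f (X i ω) * tgt (X i ω) / q i (X i ω)) 2 ℙ)
    (hL2_DM : ∀ i, MemLp (fun ω => f (X i ω) * tgt (X i ω) / ψ (X i ω)) 2 ℙ) :
    variance (fun ω => (1 / (N : ℝ)) * ∑ i, f (X i ω) * tgt (X i ω) / ψ (X i ω)) ℙ
      ≤ variance (fun ω => (1 / (N : ℝ)) * ∑ i, f (X i ω) * tgt (X i ω) / q i (X i ω)) ℙ := by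
  have hψ' : ∀ x, ψ x = (Fintype.card (Fin N) : ℝ)⁻¹ * ∑ j, q j x := by
    simpa only [Fintype.card_fin, one_div] using hψ
  have hψ_meas : Measurable ψ := by
    rw [funext hψ]
    fun_prop
  have hF : AEStronglyMeasurable (fun x => f x * tgt x) volume :=
    hf_meas.aestronglyMeasurable.mul htgt_int.1
  have hH : AEStronglyMeasurable (fun x => f x * tgt x / ψ x) volume :=
    hF.div₀ hψ_meas.aestronglyMeasurable
  have hG i : AEStronglyMeasurable (fun x => f x * tgt x / q i x) volume :=
    hF.div₀ (hq_meas i).aestronglyMeasurable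
  have hac i : Measure.map (X i) ℙ ≪ volume := hdist i ▸ withDensity_absolutelyContinuous _ _
  have hq i : 0 ≤ᵐ[volume] q i := ae_of_all _ (hq_nonneg i)
  have hvar i {φ} := variance_comp_eq_of_map_eq_withDensity (φ := φ) (hX i).aemeasurable
    (hq_meas i).aemeasurable (hq i) (hdist i)
  have hint i {φ} := integrable_mul_of_map_eq_withDensity (φ := φ) (hX i).aemeasurable
    (hq_meas i).aemeasurable (hq i) (hdist i)
  rw [variance_const_mul_sum_comp_of_iIndepFun (fun i => (hX i).aemeasurable) hindep
      (fun i => (hH.mono_ac (hac i)).aemeasurable) hL2_DM,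
    variance_const_mul_sum_comp_of_iIndepFun (fun i => (hX i).aemeasurable) hindep
      (fun i => ((hG i).mono_ac (hac i)).aemeasurable) hL2_MIS,
    sum_congr rfl fun i _ => hvar i hH (hL2_DM i),
    sum_congr rfl fun i _ => hvar i (hG i) (hL2_MIS i)]
  exact mul_le_mul_of_nonneg_left (sum_sub_sq_integral_mul_div_mixture_le hψ' hpos
    (fun i => hint i hH ((hL2_DM i).integrable one_le_two))
    (fun i => hint i (hH.pow 2) (hL2_DM i).integrable_sq)
    (fun i => hint i ((hG i).pow 2) (hL2_MIS i).integrable_sq)) (sq_nonneg _)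

/-- Theorem 1: the full DM-MIS estimator has variance no larger than
the standard MIS estimator. -/
theorem full_DM_variance_le_standard_MIS_variance
    {n N : ℕ} (hN : 0 < N)
    (tgt : (Fin n → ℝ) → ℝ) (f : (Fin n → ℝ) → ℝ)
    (htgt_nonneg : ∀ x, 0 ≤ tgt x) (htgt_int : Integrable tgt)
    (hf_meas : Measurable f)
    (q : Fin N → (Fin n → ℝ) → ℝ)
    (hq_meas : ∀ i, Measurable (q i)) (hq_nonneg : ∀ i x, 0 ≤ q i x)
    (hq_dens : ∀ i, ∫ x, q i x = 1)
    (hpos : ∀ i x, f x * tgt x ≠ 0 → 0 < q i x)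
    (ψ : (Fin n → ℝ) → ℝ)
    (hψ : ∀ x, ψ x = (1 / (N : ℝ)) * ∑ j, q j x)
    {Ω : Type*} [MeasureSpace Ω] [IsProbabilityMeasure (ℙ : Measure Ω)]
    (X : Fin N → Ω → (Fin n → ℝ)) (hX : ∀ i, Measurable (X i))
    (hindep : iIndepFun X ℙ)
    (hdist : ∀ i, Measure.map (X i) ℙ
      = volume.withDensity (fun x => ENNReal.ofReal (q i x)))
    (hL2_MIS : ∀ i, MemLp (fun ω => f (X i ω) * tgt (X i ω) / q i (X i ω)) 2 ℙ)
    (hL2_DM : ∀ i, MemLp (fun ω => f (X i ω) * tgt (X i ω) / ψ (X i ω)) 2 ℙ) :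
    variance (fun ω => (1 / (N : ℝ)) * ∑ i, f (X i ω) * tgt (X i ω) / ψ (X i ω)) ℙ
      ≤ variance (fun ω => (1 / (N : ℝ)) * ∑ i, f (X i ω) * tgt (X i ω) / q i (X i ω)) ℙ :=
  full_DM_variance_le_standard_MIS_variance_general tgt f htgt_int hf_meas q hq_meas hq_nonneg hpos
    ψ hψ X hX hindep hdist hL2_MIS hL2_DM
end

section
/- Partial DM unbiasedness: Given a partition S_1, ..., S_P of {1,...,N} and independent samples x_i ~ q_i, the partial DM-MIS estimator Î = (1/N) ∑_{p=1}^P ∑_{i ∈ S_p} f(x_i) π(x_i)/ψ_p(x_i), where ψ_p(x) = (1/|S_p|) ∑_{j ∈ S_p} q_j(x), satisfies E[Î] = ∫ f(x) π(x) dx. -/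
/-!
By linearity of expectation it suffices to treat one term: if `X_i` has density `q_i`, then
`E[g(X_i)/ψ_p(X_i)] = ∫ q_i g/ψ_p`. Summing over `i ∈ S_p`, the densities add up to `|S_p| ψ_p`,
which cancels the denominator wherever `g = fπ` is nonzero, so block `p` contributes
`|S_p| ∫ g`. As the blocks partition `{1,…,N}`, the total is `N ∫ g`.
-/

open MeasureTheory ProbabilityTheory Finset

section ChangeOfVariables

variable {Ω E F : Type*} [MeasurableSpace Ω] [MeasurableSpace E]
  [NormedAddCommGroup F] [NormedSpace ℝ F]
  {μ : Measure Ω} {ν : Measure E} {X : Ω → E} {q : E → ℝ} {h : E → F}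

lemma integrable_comp_of_map_eq_withDensity (hX : AEMeasurable X μ)
    (hlaw : μ.map X = ν.withDensity fun x => ENNReal.ofReal (q x))
    (hq : Measurable q) (hq_nonneg : ∀ x, 0 ≤ q x) (hh : AEStronglyMeasurable h ν)
    (hqh : Integrable (fun x => q x • h x) ν) : Integrable (fun ω => h (X ω)) μ := by
  have hh' : AEStronglyMeasurable h (μ.map X) :=
    hh.mono_ac (hlaw ▸ withDensity_absolutelyContinuous _ _)
  refine (integrable_map_measure hh' hX).mp ?_
  rw [hlaw]
  exact (integrable_withDensity_iff_integrable_smul hq.real_toNNReal).mpr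
    (hqh.congr (.of_forall fun x => by
      dsimp only; rw [NNReal.smul_def, Real.coe_toNNReal _ (hq_nonneg x)]))

lemma integral_comp_of_map_eq_withDensity (hX : AEMeasurable X μ)
    (hlaw : μ.map X = ν.withDensity fun x => ENNReal.ofReal (q x))
    (hq : Measurable q) (hq_nonneg : ∀ x, 0 ≤ q x) (hh : AEStronglyMeasurable h ν) :
    ∫ ω, h (X ω) ∂μ = ∫ x, q x • h x ∂ν := by
  have hh' : AEStronglyMeasurable h (μ.map X) :=
    hh.mono_ac (hlaw ▸ withDensity_absolutelyContinuous _ _)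
  rw [← integral_map hX hh', hlaw]
  exact (integral_withDensity_eq_integral_smul hq.real_toNNReal h).trans
    (integral_congr_ae (.of_forall fun x => by
      dsimp only; rw [NNReal.smul_def, Real.coe_toNNReal _ (hq_nonneg x)]))

end ChangeOfVariables

/-- The paper's `ψ_p` for `s = S_p`. -/
noncomputable def mixtureDensity {ι E : Type*} (s : Finset ι) (q : ι → E → ℝ) (x : E) : ℝ :=
  1 / #s * ∑ j ∈ s, q j x

section BalanceHeuristic

variable {ι Ω E : Type*} {s : Finset ι} {q : ι → E → ℝ} {g : E → ℝ}

section Pointwise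

variable {x : E}

lemma sum_mul_div_mixtureDensity (hpos : g x ≠ 0 → mixtureDensity s q x ≠ 0) :
    ∑ i ∈ s, q i x * (g x / mixtureDensity s q x) = #s * g x := by
  rcases eq_or_ne (g x) 0 with hg | hg
  · simp [hg]
  have hψ := hpos hg
  have hs : (#s : ℝ) ≠ 0 := fun hs => hψ (by simp [mixtureDensity, hs])
  rw [← sum_mul, show ∑ j ∈ s, q j x = #s * mixtureDensity s q x by
    rw [mixtureDensity]; field_simp]
  field_simp

lemma abs_mul_div_mixtureDensity_le (hq_nonneg : ∀ j, 0 ≤ q j x) {i : ι} (hi : i ∈ s)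
    (hpos : g x ≠ 0 → 0 < mixtureDensity s q x) :
    |q i x * (g x / mixtureDensity s q x)| ≤ #s * |g x| := by
  rcases eq_or_ne (g x) 0 with hg | hg
  · simp [hg]
  have hψ := hpos hg
  have hs : (#s : ℝ) ≠ 0 := fun hs => hψ.ne' (by simp [mixtureDensity, hs])
  have hqi : q i x ≤ #s * mixtureDensity s q x :=
    calc q i x ≤ ∑ j ∈ s, q j x := single_le_sum (fun j _ => hq_nonneg j) hi
      _ = #s * mixtureDensity s q x := by rw [mixtureDensity]; field_simp
  rw [abs_mul, abs_div, abs_of_nonneg (hq_nonneg i), abs_of_pos hψ, mul_div_assoc',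
    div_le_iff₀ hψ]
  nlinarith [abs_nonneg (g x)]

end Pointwise

variable [MeasurableSpace Ω] [MeasurableSpace E] {μ : Measure Ω} {ν : Measure E}
  {X : ι → Ω → E}

lemma measurable_mixtureDensity (hq : ∀ j, Measurable (q j)) :
    Measurable (mixtureDensity s q) :=
  measurable_const.mul (Finset.measurable_sum _ fun j _ => hq j)

lemma integrable_density_mul_div_mixtureDensity (hq : ∀ j, Measurable (q j))
    (hq_nonneg : ∀ j x, 0 ≤ q j x) (hpos : ∀ x, g x ≠ 0 → 0 < mixtureDensity s q x)
    (hg : Integrable g ν) {i : ι} (hi : i ∈ s) :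
    Integrable (fun x => q i x * (g x / mixtureDensity s q x)) ν := by
  refine (hg.const_mul #s).mono ((hq i).aestronglyMeasurable.mul
    (hg.aestronglyMeasurable.div₀ (measurable_mixtureDensity hq).aestronglyMeasurable))
    (.of_forall fun x => ?_)
  simpa only [Real.norm_eq_abs, abs_mul, Nat.abs_cast] using
    abs_mul_div_mixtureDensity_le (hq_nonneg · x) hi (hpos x)

lemma integrable_comp_div_mixtureDensity (hX : ∀ j, AEMeasurable (X j) μ)
    (hlaw : ∀ j, μ.map (X j) = ν.withDensity fun x => ENNReal.ofReal (q j x))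
    (hq : ∀ j, Measurable (q j)) (hq_nonneg : ∀ j x, 0 ≤ q j x)
    (hpos : ∀ x, g x ≠ 0 → 0 < mixtureDensity s q x) (hg : Integrable g ν)
    {i : ι} (hi : i ∈ s) :
    Integrable (fun ω => g (X i ω) / mixtureDensity s q (X i ω)) μ :=
  integrable_comp_of_map_eq_withDensity (hX i) (hlaw i) (hq i) (hq_nonneg i)
    (hg.aestronglyMeasurable.div₀ (measurable_mixtureDensity hq).aestronglyMeasurable)
    (integrable_density_mul_div_mixtureDensity hq hq_nonneg hpos hg hi)

lemma sum_integral_comp_div_mixtureDensity (hX : ∀ j, AEMeasurable (X j) μ)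
    (hlaw : ∀ j, μ.map (X j) = ν.withDensity fun x => ENNReal.ofReal (q j x))
    (hq : ∀ j, Measurable (q j)) (hq_nonneg : ∀ j x, 0 ≤ q j x)
    (hpos : ∀ x, g x ≠ 0 → 0 < mixtureDensity s q x) (hg : Integrable g ν) :
    ∑ i ∈ s, ∫ ω, g (X i ω) / mixtureDensity s q (X i ω) ∂μ = #s * ∫ x, g x ∂ν :=
  calc _ = ∑ i ∈ s, ∫ x, q i x * (g x / mixtureDensity s q x) ∂ν :=
        sum_congr rfl fun i _ => integral_comp_of_map_eq_withDensity (hX i) (hlaw i) (hq i)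
          (hq_nonneg i)
          (hg.aestronglyMeasurable.div₀ (measurable_mixtureDensity hq).aestronglyMeasurable)
    _ = ∫ x, ∑ i ∈ s, q i x * (g x / mixtureDensity s q x) ∂ν :=
        (integral_finsetSum _ fun _ hi =>
          integrable_density_mul_div_mixtureDensity hq hq_nonneg hpos hg hi).symm
    _ = ∫ x, #s * g x ∂ν :=
        integral_congr_ae (.of_forall fun x => sum_mul_div_mixtureDensity fun h => (hpos x h).ne')
    _ = #s * ∫ x, g x ∂ν := integral_const_mul _ _

end BalanceHeuristic

lemma Finset.sum_card_eq_card_of_partition {ι κ : Type*} [Fintype ι] [Fintype κ]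
    (S : κ → Finset ι) (hdisj : ∀ p p', p ≠ p' → Disjoint (S p) (S p'))
    (hcover : ∀ i, ∃ p, i ∈ S p) : ∑ p, #(S p) = Fintype.card ι := by
  classical
  rw [← card_biUnion fun p _ p' _ h => hdisj p p' h, ← card_univ]
  congr
  ext i
  simpa using hcover i

theorem partial_DM_MIS_unbiased_general
    {n N P : ℕ} (hN : 0 < N)
    (tgt : (Fin n → ℝ) → ℝ) (f : (Fin n → ℝ) → ℝ)
    (hftgt_int : Integrable (fun x => f x * tgt x))
    (q : Fin N → (Fin n → ℝ) → ℝ)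
    (hq_meas : ∀ i, Measurable (q i)) (hq_nonneg : ∀ i x, 0 ≤ q i x)
    (S : Fin P → Finset (Fin N))
    (hS_disjoint : ∀ p p', p ≠ p' → Disjoint (S p) (S p'))
    (hS_cover : ∀ i, ∃ p, i ∈ S p)
    (ψ : Fin P → (Fin n → ℝ) → ℝ)
    (hψ : ∀ p x, ψ p x = (1 / ((S p).card : ℝ)) * ∑ j ∈ S p, q j x)
    (hpos : ∀ p x, f x * tgt x ≠ 0 → 0 < ψ p x)
    {Ω : Type*} [MeasureSpace Ω]
    (X : Fin N → Ω → (Fin n → ℝ)) (hX : ∀ i, Measurable (X i))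
    (hdist : ∀ i, Measure.map (X i) ℙ
      = volume.withDensity (fun x => ENNReal.ofReal (q i x))) :
    ∫ ω, (1 / (N : ℝ)) * ∑ p, ∑ i ∈ S p, f (X i ω) * tgt (X i ω) / ψ p (X i ω) ∂ℙ
      = ∫ x, f x * tgt x := by
  obtain rfl : ψ = fun p => mixtureDensity (S p) q := funext fun p => funext (hψ p)
  have hX' : ∀ i, AEMeasurable (X i) ℙ := fun i => (hX i).aemeasurable
  have hterm (p : Fin P) {i : Fin N} (hi : i ∈ S p) :
      Integrable (fun ω => f (X i ω) * tgt (X i ω) / mixtureDensity (S p) q (X i ω)) ℙ :=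
    integrable_comp_div_mixtureDensity (g := fun x => f x * tgt x) hX' hdist hq_meas hq_nonneg
      (hpos p) hftgt_int hi
  have hblock (p : Fin P) : ∫ ω, ∑ i ∈ S p, f (X i ω) * tgt (X i ω) /
      mixtureDensity (S p) q (X i ω) ∂ℙ = #(S p) * ∫ x, f x * tgt x := by
    rw [integral_finsetSum _ fun _ => hterm p]
    exact sum_integral_comp_div_mixtureDensity hX' hdist hq_meas hq_nonneg (hpos p) hftgt_int
  have hcard : ∑ p, (#(S p) : ℝ) = N := by
    exact_mod_cast (sum_card_eq_card_of_partition S hS_disjoint hS_cover).trans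
      (Fintype.card_fin N)
  rw [integral_const_mul, integral_finsetSum _ fun p _ => integrable_finsetSum _ fun _ => hterm p,
    sum_congr rfl fun p _ => hblock p, ← sum_mul, hcard, one_div,
    inv_mul_cancel_left₀ (Nat.cast_ne_zero.mpr hN.ne')]

/-- unbiasedness of the partial DM-MIS estimator. -/
theorem partial_DM_MIS_unbiased
    {n N P : ℕ} (hN : 0 < N) (hP : 0 < P)
    (tgt : (Fin n → ℝ) → ℝ) (f : (Fin n → ℝ) → ℝ)
    (htgt_nonneg : ∀ x, 0 ≤ tgt x) (htgt_int : Integrable tgt)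
    (hf_meas : Measurable f) (hftgt_int : Integrable (fun x => f x * tgt x))
    (q : Fin N → (Fin n → ℝ) → ℝ)
    (hq_meas : ∀ i, Measurable (q i)) (hq_nonneg : ∀ i x, 0 ≤ q i x)
    (hq_dens : ∀ i, ∫ x, q i x = 1)
    (S : Fin P → Finset (Fin N))
    (hS_nonempty : ∀ p, (S p).Nonempty)
    (hS_disjoint : ∀ p p', p ≠ p' → Disjoint (S p) (S p'))
    (hS_cover : ∀ i, ∃ p, i ∈ S p)
    (ψ : Fin P → (Fin n → ℝ) → ℝ)
    (hψ : ∀ p x, ψ p x = (1 / ((S p).card : ℝ)) * ∑ j ∈ S p, q j x)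
    (hpos : ∀ p x, f x * tgt x ≠ 0 → 0 < ψ p x)
    {Ω : Type*} [MeasureSpace Ω] [IsProbabilityMeasure (ℙ : Measure Ω)]
    (X : Fin N → Ω → (Fin n → ℝ)) (hX : ∀ i, Measurable (X i))
    (hindep : iIndepFun X ℙ)
    (hdist : ∀ i, Measure.map (X i) ℙ
      = volume.withDensity (fun x => ENNReal.ofReal (q i x))) :
    ∫ ω, (1 / (N : ℝ)) * ∑ p, ∑ i ∈ S p, f (X i ω) * tgt (X i ω) / ψ p (X i ω) ∂ℙ
      = ∫ x, f x * tgt x :=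
  partial_DM_MIS_unbiased_general hN tgt f hftgt_int q hq_meas hq_nonneg S hS_disjoint hS_cover ψ hψ
    hpos X hX hdist
end
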